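/- arXiv:1908.07266 — 4 statements merged into one kernel-verified Lean document; each statement's English description precedes it below -/
import Mathlib

section
/- Let Ω be a subset of ℂ and let Ψ : ℂ³ × D → ℂ satisfy the admissibility condition: Ψ(r,s,t;z) ∉ Ω whenever z ∈ D, θ ∈ [0,2π), m ≥ 1, r = e^{e^{iθ}}, s = m e^{iθ} e^{e^{iθ}}, and Re(1 + t/s) ≥ m(1 + cos θ). If p is analytic on D with p(0) = 1 and Ψ(p(z), z p'(z), z² p''(z); z) ∈ Ω for all z ∈ D, then p belongs to the class P_e. -/
open Complex Metric Set

noncomputable def poch (x : ℂ) (n : ℕ) : ℂ := ∏ k ∈ Finset.range n, (x + k)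

/-- The class `P_e`: `p` is analytic on the unit disk, `p 0 = 1`, and `p` maps the
unit disk into `exp(𝔻)` (equivalently, `p` is subordinate to `exp`). -/
def memPe (p : ℂ → ℂ) : Prop :=
  AnalyticOnNhd ℂ p (Metric.ball 0 1) ∧ p 0 = 1 ∧
    ∀ z ∈ Metric.ball (0:ℂ) 1, p z ∈ Complex.exp '' Metric.ball 0 1

/-- The class `K_e` of exponential convex functions. -/
def memKe (f : ℂ → ℂ) : Prop :=
  AnalyticOnNhd ℂ f (Metric.ball 0 1) ∧ f 0 = 0 ∧ deriv f 0 = 1 ∧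
    (∀ z ∈ Metric.ball (0:ℂ) 1, deriv f z ≠ 0) ∧
    memPe (fun z => 1 + z * deriv (deriv f) z / deriv f z)

/-- The class `S*_e` of exponential starlike functions. -/
def memSe (f : ℂ → ℂ) : Prop :=
  AnalyticOnNhd ℂ f (Metric.ball 0 1) ∧ f 0 = 0 ∧ deriv f 0 = 1 ∧
    (∀ z ∈ Metric.ball (0:ℂ) 1, z ≠ 0 → f z ≠ 0) ∧
    memPe (fun z => if z = 0 then 1 else z * deriv f z / f z)

/-!
If `p ∉ P_e`, take a point `z₀` of least modulus with `p z₀ ∉ exp 𝔻`. On `|z| ≤ |z₀|` the function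
`p` takes values in `exp` of the closed unit disk, where `exp` is inverted by `log`, so
`w = log ∘ p` is analytic there with `w 0 = 0`, `|w| ≤ 1` and `|w z₀| = 1`. Jack's lemma (the
Schwarz bound along the radius through `z₀`, and the first- and second-order conditions for the
maximum of `|w|²` on the circle `|z| = |z₀|`) gives `z₀ w'(z₀) = m w(z₀)` with `m ≥ 1` and
`Re (z₀² w''(z₀) conj (w z₀)) ≥ m² - m`. Writing `w z₀ = e^{iθ}` and `p = e^w`, the triple
`(p, z p', z² p'')` at `z₀` is one on which `Ψ` avoids `Ω`, a contradiction.
-/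

open Filter Topology
open scoped ComplexConjugate Real

theorem IsLocalMax.deriv_deriv_nonpos {f : ℝ → ℝ} {x : ℝ} (h : IsLocalMax f x)
    (hc : ContinuousAt f x) : deriv (deriv f) x ≤ 0 := by
  by_contra! hpos
  have hconst : f =ᶠ[𝓝 x] fun _ => f x :=
    ((isLocalMin_of_deriv_deriv_pos hpos h.deriv_eq_zero hc).and h).mono
      fun y hy => le_antisymm hy.2 hy.1
  have := hconst.deriv.deriv_eq
  simp_all

theorem IsMaxOn.hasDerivAt_nonneg_of_Icc {f : ℝ → ℝ} {f' a b : ℝ} (h : IsMaxOn f (Icc a b) b)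
    (hab : a < b) (hf : HasDerivAt f f' b) : 0 ≤ f' := by
  have hy : a - b ∈ posTangentConeAt (Icc a b) b :=
    mem_posTangentConeAt_of_segment_subset <| by
      rw [add_sub_cancel, segment_symm, segment_eq_Icc hab.le]
  have := h.localize.hasFDerivWithinAt_nonpos hf.hasFDerivAt.hasFDerivWithinAt hy
  simp only [ContinuousLinearMap.toSpanSingleton_apply, smul_eq_mul] at this
  nlinarith

theorem hasDerivAt_comp_ofReal_mul {ψ : ℂ → ℂ} {z : ℂ} {t : ℝ}
    (h : DifferentiableAt ℂ ψ (t * z)) :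
    HasDerivAt (fun s : ℝ => ψ (s * z)) (deriv ψ (t * z) * z) t := by
  have hl : HasDerivAt (fun s : ℝ => (s : ℂ) * z) z t := by
    simpa using ((hasDerivAt_id t).ofReal_comp).mul_const z
  exact h.hasDerivAt.comp t hl

theorem hasDerivAt_comp_circleMap {ψ : ℂ → ℂ} {R θ : ℝ}
    (h : DifferentiableAt ℂ ψ (circleMap 0 R θ)) :
    HasDerivAt (fun θ => ψ (circleMap 0 R θ))
      (deriv ψ (circleMap 0 R θ) * (circleMap 0 R θ * I)) θ :=
  h.hasDerivAt.comp θ (hasDerivAt_circleMap 0 R θ)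

theorem one_le_re_mul_deriv_mul_conj_of_mapsTo_ball {φ : ℂ → ℂ} {z₀ : ℂ}
    (hd : DifferentiableOn ℂ φ (ball 0 ‖z₀‖)) (hmaps : MapsTo φ (ball 0 ‖z₀‖) (closedBall 0 1))
    (hφ0 : φ 0 = 0) (hz₀ : ‖φ z₀‖ = 1) (hdz₀ : DifferentiableAt ℂ φ z₀) :
    1 ≤ (z₀ * deriv φ z₀ * conj (φ z₀)).re := by
  have hr : 0 < ‖z₀‖ := norm_pos_iff.mpr fun h => by simp [h, hφ0] at hz₀
  have hschwarz : ∀ t ∈ Ico (0 : ℝ) 1, ‖φ (t * z₀)‖ ≤ t := by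
    intro t ⟨ht0, ht1⟩
    have hmem : (t : ℂ) * z₀ ∈ ball 0 ‖z₀‖ := by
      rw [mem_ball_zero_iff, norm_mul, norm_real, Real.norm_of_nonneg ht0]
      exact mul_lt_of_lt_one_left hr ht1
    have := Complex.dist_le_div_mul_dist_of_mapsTo_ball hd (by rwa [hφ0]) hmem
    rw [hφ0, dist_zero_right, dist_zero_right, norm_mul, norm_real, Real.norm_of_nonneg ht0] at this
    rwa [div_mul_eq_mul_div, one_mul, mul_div_assoc, div_self hr.ne', mul_one] at this
  have hmax : IsMaxOn (fun t : ℝ => ‖φ (t * z₀)‖ ^ 2 - t ^ 2) (Icc 0 1) 1 := by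
    intro t ⟨ht0, ht1⟩
    rcases ht1.lt_or_eq with ht1 | rfl
    · have := hschwarz t ⟨ht0, ht1⟩
      show _ ≤ ‖φ ((1 : ℝ) * z₀)‖ ^ 2 - 1 ^ 2
      rw [ofReal_one, one_mul, hz₀]
      nlinarith [norm_nonneg (φ (t * z₀))]
    · exact le_refl (‖φ ((1 : ℝ) * z₀)‖ ^ 2 - 1 ^ 2)
  have hderiv := ((hasDerivAt_comp_ofReal_mul (t := 1) (by simpa using hdz₀)).norm_sq).sub
    (hasDerivAt_pow 2 (1 : ℝ))
  have := hmax.hasDerivAt_nonneg_of_Icc one_pos hderiv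
  norm_num [Complex.inner, mul_comm (deriv φ z₀)] at this ⊢
  linarith

theorem circleMap_zero_norm_arg (z : ℂ) : circleMap 0 ‖z‖ (arg z) = z := by
  rw [circleMap_zero, norm_mul_exp_arg_mul_I]

theorem im_eq_zero_and_norm_sq_le_of_isMaxOn_sphere {φ : ℂ → ℂ} {z₀ : ℂ}
    (hφ : AnalyticOnNhd ℂ φ (sphere 0 ‖z₀‖)) (hmax : IsMaxOn (‖φ ·‖) (sphere 0 ‖z₀‖) z₀) :
    (z₀ * deriv φ z₀ * conj (φ z₀)).im = 0 ∧
      ‖z₀ * deriv φ z₀‖ ^ 2 ≤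
        ((z₀ ^ 2 * deriv (deriv φ) z₀ + z₀ * deriv φ z₀) * conj (φ z₀)).re := by
  have hγ : ∀ θ, circleMap 0 ‖z₀‖ θ ∈ sphere 0 ‖z₀‖ := circleMap_mem_sphere 0 (norm_nonneg z₀)
  have hγ₀ : circleMap 0 ‖z₀‖ (arg z₀) = z₀ := circleMap_zero_norm_arg z₀
  set F' : ℝ → ℂ := fun θ => deriv φ (circleMap 0 ‖z₀‖ θ) * (circleMap 0 ‖z₀‖ θ * I)
  have hF : ∀ θ, HasDerivAt (fun θ => φ (circleMap 0 ‖z₀‖ θ)) (F' θ) θ := fun θ =>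
    hasDerivAt_comp_circleMap (hφ _ (hγ θ)).differentiableAt
  have hF' : HasDerivAt F' (deriv (deriv φ) z₀ * (z₀ * I) * (z₀ * I) + deriv φ z₀ * (z₀ * I * I))
      (arg z₀) := by
    have := (hasDerivAt_comp_circleMap ((hφ.deriv _ (hγ (arg z₀))).differentiableAt)).mul
      ((hasDerivAt_circleMap 0 ‖z₀‖ (arg z₀)).mul_const I)
    rw [hγ₀] at this
    exact this
  set g : ℝ → ℝ := fun θ => ‖φ (circleMap 0 ‖z₀‖ θ)‖ ^ 2
  have hg : ∀ θ, HasDerivAt g (2 * inner ℝ (φ (circleMap 0 ‖z₀‖ θ)) (F' θ)) θ :=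
    fun θ => (hF θ).norm_sq
  have hloc : IsLocalMax g (arg z₀) := Eventually.of_forall fun θ => by
    simp only [g, hγ₀]
    exact pow_le_pow_left₀ (norm_nonneg _) (hmax (hγ θ)) 2
  have hfirst := hloc.hasDerivAt_eq_zero (hg (arg z₀))
  have hsecond := hloc.deriv_deriv_nonpos (hg (arg z₀)).continuousAt
  rw [show deriv g = fun θ => 2 * inner ℝ (φ (circleMap 0 ‖z₀‖ θ)) (F' θ) from
    funext fun θ => (hg θ).deriv, (((hF (arg z₀)).inner ℝ hF').const_mul 2).deriv] at hsecond
  simp only [F', hγ₀, Complex.inner, real_inner_self_eq_norm_sq] at hfirst hsecond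
  rw [show deriv φ z₀ * (z₀ * I) * conj (φ z₀) = z₀ * deriv φ z₀ * conj (φ z₀) * I by ring,
    mul_I_re] at hfirst
  rw [show deriv (deriv φ) z₀ * (z₀ * I) * (z₀ * I) + deriv φ z₀ * (z₀ * I * I) =
      -(z₀ ^ 2 * deriv (deriv φ) z₀ + z₀ * deriv φ z₀) by
    linear_combination (z₀ ^ 2 * deriv (deriv φ) z₀ + z₀ * deriv φ z₀) * I_sq,
    show deriv φ z₀ * (z₀ * I) = z₀ * deriv φ z₀ * I by ring, norm_mul, norm_I, mul_one, neg_mul,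
    neg_re] at hsecond
  constructor <;> linarith

theorem jack_lemma {φ : ℂ → ℂ} {z₀ : ℂ} (hφ : AnalyticOnNhd ℂ φ (closedBall 0 ‖z₀‖))
    (hφ0 : φ 0 = 0) (hmaps : MapsTo φ (closedBall 0 ‖z₀‖) (closedBall 0 1)) (hz₀ : ‖φ z₀‖ = 1) :
    ∃ m : ℝ, 1 ≤ m ∧ z₀ * deriv φ z₀ = m * φ z₀ ∧
      m ^ 2 - m ≤ (z₀ ^ 2 * deriv (deriv φ) z₀ * conj (φ z₀)).re := by
  have hm := one_le_re_mul_deriv_mul_conj_of_mapsTo_ball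
    (hφ.differentiableOn.mono ball_subset_closedBall) (hmaps.mono_left ball_subset_closedBall)
    hφ0 hz₀ (hφ z₀ (mem_closedBall_zero_iff.mpr le_rfl)).differentiableAt
  obtain ⟨him, hsq⟩ :=
    im_eq_zero_and_norm_sq_le_of_isMaxOn_sphere (hφ.mono sphere_subset_closedBall) fun z hz =>
      by simpa [hz₀] using hmaps (sphere_subset_closedBall hz)
  set a := φ z₀
  set c := z₀ * deriv φ z₀
  set m := (c * conj a).re
  have hca : c * conj a = m := Complex.ext rfl (by simpa using him)
  have hc : c = m * a := by
    calc c = c * (conj a * a) := by rw [conj_mul', hz₀]; simp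
      _ = m * a := by rw [← mul_assoc, hca]
  refine ⟨m, hm, hc, ?_⟩
  rw [hc, norm_mul, norm_real, hz₀, Real.norm_of_nonneg (by linarith), add_mul, add_re,
    ← hc, hca, ofReal_re] at hsq
  linarith

theorem exists_notMem_minimal_norm {E F : Type*} [NormedAddCommGroup E] [ProperSpace E]
    [TopologicalSpace F] {p : E → F} {U : Set F} {R : ℝ} (hp : ContinuousOn p (ball 0 R))
    (hU : IsOpen U) {z : E} (hz : z ∈ ball 0 R) (hpz : p z ∉ U) :
    ∃ z₀ ∈ ball (0 : E) R, p z₀ ∉ U ∧ MapsTo p (ball 0 ‖z₀‖) U := by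
  have hsub : closedBall (0 : E) ‖z‖ ⊆ ball 0 R :=
    closedBall_subset_ball (mem_ball_zero_iff.mp hz)
  have hK : IsCompact (closedBall (0 : E) ‖z‖ ∩ p ⁻¹' Uᶜ) :=
    (isCompact_closedBall 0 ‖z‖).of_isClosed_subset
      ((hp.mono hsub).preimage_isClosed_of_isClosed isClosed_closedBall hU.isClosed_compl)
      inter_subset_left
  obtain ⟨z₀, ⟨hz₀z, hpz₀⟩, hmin⟩ :=
    hK.exists_isMinOn ⟨z, mem_closedBall_zero_iff.mpr le_rfl, hpz⟩ continuous_norm.continuousOn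
  refine ⟨z₀, hsub hz₀z, hpz₀, fun w hw => ?_⟩
  by_contra hpw
  have hw : ‖w‖ < ‖z₀‖ := mem_ball_zero_iff.mp hw
  have hwz : w ∈ closedBall (0 : E) ‖z‖ :=
    mem_closedBall_zero_iff.mpr (hw.le.trans (mem_closedBall_zero_iff.mp hz₀z))
  exact (hmin ⟨hwz, hpw⟩).not_gt hw

theorem mem_expOpenPartialHomeomorph_source_of_mem_closedBall {r : ℝ} (hr : r < π) {w : ℂ}
    (hw : w ∈ closedBall 0 r) : w ∈ expOpenPartialHomeomorph.source :=
  abs_lt.mp (((abs_im_le_norm w).trans (mem_closedBall_zero_iff.mp hw)).trans_lt hr)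

theorem exp_image_closedBall_subset_slitPlane {r : ℝ} (hr : r < π) :
    exp '' closedBall 0 r ⊆ slitPlane := by
  rintro _ ⟨w, hw, rfl⟩
  exact expOpenPartialHomeomorph.map_source
    (mem_expOpenPartialHomeomorph_source_of_mem_closedBall hr hw)

theorem log_mem_closedBall_of_mem_exp_image {r : ℝ} (hr : r < π) {u : ℂ}
    (hu : u ∈ exp '' closedBall 0 r) : log u ∈ closedBall 0 r := by
  obtain ⟨w, hw, rfl⟩ := hu
  obtain ⟨him, him'⟩ := mem_expOpenPartialHomeomorph_source_of_mem_closedBall hr hw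
  rwa [log_exp him him'.le]

theorem exists_mem_Ico_exp_mul_I_eq {a : ℂ} (ha : ‖a‖ = 1) :
    ∃ θ ∈ Ico 0 (2 * π), exp (θ * I) = a := by
  obtain ⟨θ, hθ, he⟩ := (periodic_circleMap 0 1).exists_mem_Ico₀ Real.two_pi_pos (arg a)
  refine ⟨θ, hθ, ?_⟩
  simp only [circleMap_zero, ofReal_one, one_mul] at he
  rw [← he]
  simpa [ha] using norm_mul_exp_arg_mul_I a

theorem deriv_eq_and_deriv_deriv_eq_of_eventuallyEq_exp {p φ : ℂ → ℂ} {z : ℂ}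
    (hφ : AnalyticAt ℂ φ z) (hp : p =ᶠ[𝓝 z] fun w => exp (φ w)) :
    deriv p z = exp (φ z) * deriv φ z ∧
      deriv (deriv p) z = exp (φ z) * (deriv φ z ^ 2 + deriv (deriv φ) z) := by
  have hderiv : deriv p =ᶠ[𝓝 z] fun w => exp (φ w) * deriv φ w := by
    filter_upwards [hp.deriv, hφ.eventually_analyticAt] with w hw hφw
    rw [hw, hφw.differentiableAt.hasDerivAt.cexp.deriv]
  refine ⟨hderiv.eq_of_nhds, ?_⟩
  have hprod : HasDerivAt (fun w => exp (φ w) * deriv φ w)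
      (exp (φ z) * deriv φ z * deriv φ z + exp (φ z) * deriv (deriv φ) z) z :=
    hφ.differentiableAt.hasDerivAt.cexp.mul hφ.deriv.differentiableAt.hasDerivAt
  rw [hderiv.deriv_eq, hprod.deriv]
  ring

theorem mul_one_add_re_le_re_one_add_div {a e T : ℂ} {m : ℝ} (ha : ‖a‖ = 1) (hm : 0 < m)
    (he : e ≠ 0) (hT : m ^ 2 - m ≤ (T * conj a).re) :
    m * (1 + a.re) ≤ (1 + ((m * a) ^ 2 + T) * e / (m * a * e)).re := by
  have ha0 : a ≠ 0 := norm_ne_zero_iff.mp (by simp [ha])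
  have hinv : a⁻¹ = conj a := by rw [inv_def, normSq_eq_norm_sq, ha]; simp
  have : ((m * a) ^ 2 + T) * e / (m * a * e) = m * a + T * conj a / m := by
    rw [← hinv]; field_simp
  rw [this, add_re, add_re, re_ofReal_mul, div_ofReal_re, one_re]
  have : m - 1 ≤ (T * conj a).re / m := by
    rw [le_div_iff₀ hm]; linarith
  nlinarith

theorem exists_exp_boundary_data_of_log {p φ : ℂ → ℂ} {z₀ : ℂ} {m : ℝ} (hφ : AnalyticAt ℂ φ z₀)
    (hp : p =ᶠ[𝓝 z₀] fun w => exp (φ w)) (hnorm : ‖φ z₀‖ = 1) (hm : 1 ≤ m)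
    (hc : z₀ * deriv φ z₀ = m * φ z₀)
    (hT : m ^ 2 - m ≤ (z₀ ^ 2 * deriv (deriv φ) z₀ * conj (φ z₀)).re) :
    ∃ θ ∈ Ico 0 (2 * π), p z₀ = exp (exp (θ * I)) ∧
      z₀ * deriv p z₀ = m * exp (θ * I) * p z₀ ∧
      m * (1 + Real.cos θ) ≤ (1 + z₀ ^ 2 * deriv (deriv p) z₀ / (z₀ * deriv p z₀)).re := by
  obtain ⟨θ, hθ, hexpθ⟩ := exists_mem_Ico_exp_mul_I_eq hnorm
  obtain ⟨hd1, hd2⟩ := deriv_eq_and_deriv_deriv_eq_of_eventuallyEq_exp hφ hp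
  have hs : z₀ * deriv p z₀ = m * φ z₀ * exp (φ z₀) := by
    rw [hd1, ← hc]; ring
  have ht : z₀ ^ 2 * deriv (deriv p) z₀ =
      ((m * φ z₀) ^ 2 + z₀ ^ 2 * deriv (deriv φ) z₀) * exp (φ z₀) := by
    rw [hd2, ← hc]; ring
  refine ⟨θ, hθ, by rw [hexpθ, hp.eq_of_nhds], by rw [hs, hexpθ, hp.eq_of_nhds], ?_⟩
  rw [hs, ht, ← exp_ofReal_mul_I_re, hexpθ]
  exact mul_one_add_re_le_re_one_add_div hnorm (by linarith) (exp_ne_zero _) hT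

theorem exists_mapsTo_closedBall_exp_of_notMem {p : ℂ → ℂ} (hp : ContinuousOn p (ball 0 1))
    (hp0 : p 0 = 1) {z : ℂ} (hz : z ∈ ball 0 1) (hpz : p z ∉ exp '' ball 0 1) :
    ∃ z₀ ∈ ball (0 : ℂ) 1, p z₀ ∉ exp '' ball 0 1 ∧
      MapsTo p (closedBall 0 ‖z₀‖) (exp '' closedBall 0 1) := by
  obtain ⟨z₀, hz₀, hpz₀, hinside⟩ :=
    exists_notMem_minimal_norm hp (isOpenMap_exp _ isOpen_ball) hz hpz
  have hr : ‖z₀‖ ≠ 0 := fun h => hpz₀ <| by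
    rw [norm_eq_zero.mp h, hp0]
    exact ⟨0, mem_ball_self one_pos, exp_zero⟩
  refine ⟨z₀, hz₀, hpz₀, ?_⟩
  rw [← closure_ball 0 hr]
  refine (hinside.closure_of_continuousOn (hp.mono ?_)).mono_right ?_
  · rw [closure_ball 0 hr]
    exact closedBall_subset_ball (mem_ball_zero_iff.mp hz₀)
  · exact closure_minimal (image_mono ball_subset_closedBall)
      ((isCompact_closedBall 0 1).image continuous_exp).isClosed

theorem exists_exp_boundary_data {p : ℂ → ℂ} {z₀ : ℂ}
    (hp : AnalyticOnNhd ℂ p (closedBall 0 ‖z₀‖)) (hp0 : p 0 = 1)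
    (hmaps : MapsTo p (closedBall 0 ‖z₀‖) (exp '' closedBall 0 1))
    (hpz₀ : p z₀ ∉ exp '' ball 0 1) :
    ∃ m : ℝ, 1 ≤ m ∧ ∃ θ ∈ Ico 0 (2 * π), p z₀ = exp (exp (θ * I)) ∧
      z₀ * deriv p z₀ = m * exp (θ * I) * p z₀ ∧
      m * (1 + Real.cos θ) ≤ (1 + z₀ ^ 2 * deriv (deriv p) z₀ / (z₀ * deriv p z₀)).re := by
  have hπ : (1 : ℝ) < π := by linarith [Real.pi_gt_three]
  have hslit : ∀ w ∈ closedBall 0 ‖z₀‖, p w ∈ slitPlane := fun w hw =>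
    exp_image_closedBall_subset_slitPlane hπ (hmaps hw)
  have hexp : ∀ w ∈ closedBall 0 ‖z₀‖, exp (log (p w)) = p w := fun w hw =>
    exp_log (slitPlane_ne_zero (hslit w hw))
  have hφ : AnalyticOnNhd ℂ (fun w => log (p w)) (closedBall 0 ‖z₀‖) := fun w hw =>
    (hp w hw).clog (hslit w hw)
  have hφmaps : MapsTo (fun w => log (p w)) (closedBall 0 ‖z₀‖) (closedBall 0 1) := fun w hw =>
    log_mem_closedBall_of_mem_exp_image hπ (hmaps hw)
  have hz₀ : z₀ ∈ closedBall 0 ‖z₀‖ := mem_closedBall_zero_iff.mpr le_rfl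
  have hnorm : ‖log (p z₀)‖ = 1 := (mem_closedBall_zero_iff.mp (hφmaps hz₀)).antisymm <|
    not_lt.mp fun h => hpz₀ ⟨_, mem_ball_zero_iff.mpr h, hexp z₀ hz₀⟩
  have hpeq : p =ᶠ[𝓝 z₀] fun w => exp (log (p w)) := by
    filter_upwards [(hp z₀ hz₀).continuousAt.eventually_mem
      (isOpen_slitPlane.mem_nhds (hslit z₀ hz₀))] with w hw
    exact (exp_log (slitPlane_ne_zero hw)).symm
  obtain ⟨m, hm, hc, hT⟩ := jack_lemma hφ (by simp [hp0]) hφmaps hnorm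
  exact ⟨m, hm, exists_exp_boundary_data_of_log (hφ z₀ hz₀) hpeq hnorm hm hc hT⟩

/-- **Admissibility lemma for the exponential function.**
If `Ψ(r,s,t;z) ∉ Ω` whenever `z ∈ 𝔻`, `θ ∈ [0,2π)`, `m ≥ 1`, `r = e^{e^{iθ}}`,
`s = m e^{iθ} r` and `Re(1 + t/s) ≥ m(1 + cos θ)`, and `p` is analytic on `𝔻` with
`p(0) = 1` and `Ψ(p(z), z p'(z), z² p''(z); z) ∈ Ω` on `𝔻`, then `p ∈ P_e`. -/
theorem admissibility_exponential (Ω : Set ℂ) (Ψ : ℂ → ℂ → ℂ → ℂ → ℂ)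
    (hΨ : ∀ z ∈ Metric.ball (0:ℂ) 1, ∀ θ ∈ Set.Ico (0:ℝ) (2 * Real.pi), ∀ m : ℝ, 1 ≤ m →
      ∀ r s t : ℂ, r = Complex.exp (Complex.exp (θ * I)) →
        s = (m : ℂ) * Complex.exp (θ * I) * r →
        m * (1 + Real.cos θ) ≤ (1 + t / s).re → Ψ r s t z ∉ Ω)
    (p : ℂ → ℂ) (hp : AnalyticOnNhd ℂ p (Metric.ball 0 1)) (hp0 : p 0 = 1)
    (hmem : ∀ z ∈ Metric.ball (0:ℂ) 1,
      Ψ (p z) (z * deriv p z) (z ^ 2 * deriv (deriv p) z) z ∈ Ω) :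
    memPe p := by
  refine ⟨hp, hp0, fun z hz => ?_⟩
  by_contra hpz
  obtain ⟨z₀, hz₀, hpz₀, hmaps⟩ :=
    exists_mapsTo_closedBall_exp_of_notMem hp.continuousOn hp0 hz hpz
  obtain ⟨m, hm, θ, hθ, hr, hs, ht⟩ := exists_exp_boundary_data
    (hp.mono (closedBall_subset_ball (mem_ball_zero_iff.mp hz₀))) hp0 hmaps hpz₀
  exact hΨ z₀ hz₀ θ hθ m hm _ _ _ hr hs ht (hmem z₀ hz₀)
end

section
/- Let a, c ∈ ℂ with c not zero or a negative integer and Re(c) ≥ |a| + 2. Then the function z ↦ Φ(a;c;z) belongs to the class P_e. -/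
/-!
`Φ = Φ(a;c;·)` is entire with `Φ(0) = 1` and satisfies Kummer's equation
`z Φ'' + (c - z) Φ' = a Φ`. If `Φ` leaves `exp 𝔻` somewhere in `𝔻`, let `z₀` be such a point of
least modulus. On `|z| ≤ |z₀|` the function `ω = log Φ` is holomorphic with `ω(0) = 0`, `|ω| ≤ 1`
and `|ω(z₀)| = 1`, so Jack's lemma gives `z₀ ω'(z₀) = m ω(z₀)` with `m ≥ 1` and
`Re (z₀² ω''(z₀) conj ω(z₀)) ≥ m² - m`. Written for `ω`, Kummer's equation reads
`z₀² ω'' + (z₀ ω')² + (c - z₀) z₀ ω' = a z₀`; pairing it with `ω(z₀)` and using `Re c ≥ |a| + 2`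
gives `m ≤ |a| (|z₀| - m) + m |z₀| < m`.
-/

open Complex Metric Set

/-- The confluent (Kummer) hypergeometric function `Φ(a;c;z)`. -/
noncomputable def Phi (a c z : ℂ) : ℂ :=
  ∑' n : ℕ, poch a n / poch c n * z ^ n / (n.factorial : ℂ)

open Filter Topology
open scoped Nat InnerProductSpace ComplexConjugate

section PowerSeries

variable {D : ℕ → ℂ} {K : ℝ}

noncomputable def powerSum (D : ℕ → ℂ) (z : ℂ) : ℂ := ∑' n, D n * z ^ n

def derivCoeff (D : ℕ → ℂ) (n : ℕ) : ℂ := (n + 1) * D (n + 1)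

lemma powerSum_zero (D : ℕ → ℂ) : powerSum D 0 = D 0 := by
  rw [powerSum, tsum_eq_single 0 fun n hn => by simp [hn]]
  simp

lemma norm_derivCoeff_le (hD : ∀ n, ‖D n‖ ≤ K / n !) (n : ℕ) : ‖derivCoeff D n‖ ≤ K / n ! := by
  have hK := hD (n + 1)
  rw [Nat.factorial_succ, Nat.cast_mul, ← div_div] at hK
  rw [derivCoeff, norm_mul, ← Nat.cast_succ, norm_natCast]
  calc ((n + 1 : ℕ) : ℝ) * ‖D (n + 1)‖ ≤ (n + 1 : ℕ) * (K / (n + 1 : ℕ) / n !) := by gcongr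
    _ = K / n ! := by field_simp

lemma norm_mul_pow_le (hD : ∀ n, ‖D n‖ ≤ K / n !) {z : ℂ} {R : ℝ} (hz : ‖z‖ ≤ R) (n : ℕ) :
    ‖D n * z ^ n‖ ≤ K * (R ^ n / n !) := by
  calc ‖D n * z ^ n‖ = ‖D n‖ * ‖z‖ ^ n := by rw [norm_mul, norm_pow]
    _ ≤ K / n ! * R ^ n := by
      gcongr
      · exact (norm_nonneg _).trans (hD n)
      · exact hD n
    _ = K * (R ^ n / n !) := by ring

lemma summable_mul_pow (hD : ∀ n, ‖D n‖ ≤ K / n !) (z : ℂ) :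
    Summable fun n => D n * z ^ n :=
  .of_norm_bounded ((Real.summable_pow_div_factorial ‖z‖).mul_left K)
    (norm_mul_pow_le hD le_rfl)

lemma hasSum_powerSum (hD : ∀ n, ‖D n‖ ≤ K / n !) (z : ℂ) :
    HasSum (fun n => D n * z ^ n) (powerSum D z) :=
  (summable_mul_pow hD z).hasSum

lemma hasDerivAt_powerSum (hD : ∀ n, ‖D n‖ ≤ K / n !) (z : ℂ) :
    HasDerivAt (powerSum D) (powerSum (derivCoeff D) z) z := by
  have hshift : powerSum D = fun y => D 0 + ∑' n, D (n + 1) * y ^ (n + 1) := funext fun y => by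
    rw [powerSum, (summable_mul_pow hD y).tsum_eq_zero_add, pow_zero, mul_one]
  rw [hshift]
  refine .const_add _ (hasDerivAt_tsum_of_isPreconnected (g := fun n y => D (n + 1) * y ^ (n + 1))
    (g' := fun n y => derivCoeff D n * y ^ n)
    ((Real.summable_pow_div_factorial (‖z‖ + 1)).mul_left K) isOpen_ball
    (convex_ball 0 (‖z‖ + 1)).isPreconnected (fun n y _ => ?_)
    (fun n y hy => norm_mul_pow_le (norm_derivCoeff_le hD) (mem_ball_zero_iff.1 hy).le n)
    (mem_ball_self (by positivity)) (by simp) (mem_ball_zero_iff.2 (lt_add_one _)))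
  exact ((hasDerivAt_pow (n + 1) y).const_mul (D (n + 1))).congr_deriv (by
    simp only [Nat.cast_add, Nat.cast_one, add_tsub_cancel_right, derivCoeff]
    ring)

lemma hasSum_mul_powerSum_derivCoeff (hD : ∀ n, ‖D n‖ ≤ K / n !) (z : ℂ) :
    HasSum (fun n => n * D n * z ^ n) (z * powerSum (derivCoeff D) z) := by
  refine (hasSum_nat_add_iff' 1).1 ?_
  simp only [Finset.range_one, Finset.sum_singleton, Nat.cast_zero, zero_mul, sub_zero]
  exact ((hasSum_powerSum (norm_derivCoeff_le hD) z).mul_left z).congr_fun fun n => by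
    simp only [Nat.cast_add, Nat.cast_one, derivCoeff]
    ring

theorem powerSum_kummer {a c : ℂ} (hD : ∀ n, ‖D n‖ ≤ K / n !)
    (hrec : ∀ n : ℕ, (n + 1) * (c + n) * D (n + 1) = (a + n) * D n) (z : ℂ) :
    z * powerSum (derivCoeff (derivCoeff D)) z + (c - z) * powerSum (derivCoeff D) z =
      a * powerSum D z := by
  have hD' := norm_derivCoeff_le hD
  have hsum := ((hasSum_mul_powerSum_derivCoeff hD' z).add
    ((hasSum_powerSum hD' z).mul_left c)).sub
    ((hasSum_mul_powerSum_derivCoeff hD z).add ((hasSum_powerSum hD z).mul_left a))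
  have hzero : (fun n : ℕ => n * derivCoeff D n * z ^ n + c * (derivCoeff D n * z ^ n) -
      (n * D n * z ^ n + a * (D n * z ^ n))) = 0 := by
    ext n
    simp only [derivCoeff, Pi.zero_apply]
    linear_combination z ^ n * hrec n
  rw [hzero] at hsum
  linear_combination hsum.unique hasSum_zero

end PowerSeries

section Kummer

variable {a c : ℂ}

lemma poch_succ (x : ℂ) (n : ℕ) : poch x (n + 1) = poch x n * (x + n) :=
  Finset.prod_range_succ _ _

lemma poch_ne_zero (hc : 0 < c.re) (n : ℕ) : poch c n ≠ 0 :=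
  Finset.prod_ne_zero_iff.2 fun k _ hk => by
    have := congrArg re hk
    simp only [add_re, natCast_re, zero_re] at this
    linarith [k.cast_nonneg (α := ℝ)]

lemma norm_poch_le (h : ‖a‖ ≤ c.re) (n : ℕ) : ‖poch a n‖ ≤ ‖poch c n‖ := by
  simp only [poch, norm_prod]
  refine Finset.prod_le_prod (fun _ _ => norm_nonneg _) fun k _ => ?_
  calc ‖a + k‖ ≤ ‖a‖ + k := (norm_add_le _ _).trans_eq (by rw [norm_natCast])
    _ ≤ (c + k).re := by simpa using h
    _ ≤ ‖c + k‖ := re_le_norm _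

noncomputable def kummerCoeff (a c : ℂ) (n : ℕ) : ℂ := poch a n / poch c n / n !

lemma Phi_eq_powerSum (a c : ℂ) : Phi a c = powerSum (kummerCoeff a c) :=
  funext fun z => tsum_congr fun n => by rw [kummerCoeff]; ring

lemma kummerCoeff_zero (a c : ℂ) : kummerCoeff a c 0 = 1 := by
  simp [kummerCoeff, poch]

lemma norm_kummerCoeff_le (h : ‖a‖ ≤ c.re) (n : ℕ) : ‖kummerCoeff a c n‖ ≤ 1 / n ! := by
  rw [kummerCoeff, norm_div, norm_div, norm_natCast]
  gcongr
  exact div_le_one_of_le₀ (norm_poch_le h n) (norm_nonneg _)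

lemma kummerCoeff_succ (hc : 0 < c.re) (n : ℕ) :
    (n + 1) * (c + n) * kummerCoeff a c (n + 1) = (a + n) * kummerCoeff a c n := by
  have hcn : c + n ≠ 0 := right_ne_zero_of_mul (poch_succ c n ▸ poch_ne_zero hc (n + 1))
  have := poch_ne_zero hc n
  simp only [kummerCoeff, poch_succ, Nat.factorial_succ, Nat.cast_mul, Nat.cast_succ]
  field_simp

lemma Phi_zero (a c : ℂ) : Phi a c 0 = 1 := by
  rw [Phi_eq_powerSum, powerSum_zero, kummerCoeff_zero]

theorem Phi_kummer (h : ‖a‖ < c.re) :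
    ∃ Φ' Φ'' : ℂ → ℂ, (∀ z, HasDerivAt (Phi a c) (Φ' z) z) ∧ (∀ z, HasDerivAt Φ' (Φ'' z) z) ∧
      ∀ z, z * Φ'' z + (c - z) * Φ' z = a * Phi a c z := by
  have hB := norm_kummerCoeff_le h.le
  rw [Phi_eq_powerSum]
  exact ⟨_, _, hasDerivAt_powerSum hB, hasDerivAt_powerSum (norm_derivCoeff_le hB),
    powerSum_kummer hB (kummerCoeff_succ ((norm_nonneg a).trans_lt h))⟩

end Kummer

section RealCalculus

lemma le_of_hasDerivAt_of_le_nhdsLT {f g : ℝ → ℝ} {f' g' x : ℝ} (hf : HasDerivAt f f' x)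
    (hg : HasDerivAt g g' x) (hle : ∀ᶠ y in 𝓝[<] x, f y ≤ g y) (heq : f x = g x) : g' ≤ f' := by
  refine sub_nonneg.1 (ge_of_tendsto ((hasDerivAt_iff_tendsto_slope.1 (hf.sub hg)).mono_left
    (nhdsLT_le_nhdsNE x)) ?_)
  filter_upwards [hle, self_mem_nhdsWithin] with y hy (hyx : y < x)
  rw [slope_def_field]
  exact div_nonneg_of_nonpos (by simp only [Pi.sub_apply]; linarith) (by linarith)

lemma IsLocalMax.second_deriv_nonpos {h k : ℝ → ℝ} {x κ : ℝ} (hmax : IsLocalMax h x)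
    (hh : ∀ᶠ y in 𝓝 x, HasDerivAt h (k y) y) (hk : HasDerivAt k κ x) : κ ≤ 0 := by
  by_contra! hκ
  have hkx : k x = 0 := hmax.hasDerivAt_eq_zero hh.self_of_nhds
  have hderiv : deriv h =ᶠ[𝓝 x] k := hh.mono fun y hy => hy.deriv
  have hmin : IsLocalMin h x := by
    refine isLocalMin_of_sign_deriv hh.self_of_nhds.continuousAt (nhdsWithin_le_nhds ?_)
    filter_upwards [hderiv, eventually_nhdsWithin_sign_eq_of_deriv_pos (hk.deriv ▸ hκ) hkx]
      with y hy hsign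
    rw [hy, hsign]
  have hconst : h =ᶠ[𝓝 x] fun _ => h x := (hmin.and hmax).mono fun y hy => le_antisymm hy.2 hy.1
  have hk0 : k =ᶠ[𝓝 x] fun _ => 0 := hderiv.symm.trans (by simpa using hconst.deriv)
  exact hκ.ne' ((hk.congr_of_eventuallyEq hk0.symm).unique (hasDerivAt_const x 0))

end RealCalculus

lemma IsLocalMax.norm_sq {E : Type*} [SeminormedAddCommGroup E] {f : ℝ → E} {x : ℝ}
    (hmax : IsLocalMax (‖f ·‖) x) : IsLocalMax (‖f ·‖ ^ 2) x :=
  hmax.mono fun _ hy => pow_le_pow_left₀ (norm_nonneg _) hy 2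

section NormMax

variable {E : Type*} [NormedAddCommGroup E] [InnerProductSpace ℝ E] {u u' : ℝ → E} {u'' : E}
  {x : ℝ}

lemma inner_deriv_eq_zero_of_isLocalMax_norm (hmax : IsLocalMax (‖u ·‖) x)
    (hu : HasDerivAt u (u' x) x) : ⟪u x, u' x⟫_ℝ = 0 := by
  simpa using hmax.norm_sq.hasDerivAt_eq_zero hu.norm_sq

lemma inner_deriv2_add_norm_sq_nonpos_of_isLocalMax_norm (hmax : IsLocalMax (‖u ·‖) x)
    (hu : ∀ᶠ t in 𝓝 x, HasDerivAt u (u' t) t) (hu' : HasDerivAt u' u'' x) :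
    ⟪u x, u''⟫_ℝ + ‖u' x‖ ^ 2 ≤ 0 := by
  have := hmax.norm_sq.second_deriv_nonpos (hu.mono fun t ht => ht.norm_sq)
    ((hu.self_of_nhds.inner ℝ hu').const_mul 2)
  rw [real_inner_self_eq_norm_sq] at this
  linarith

end NormMax

section JackLemma

variable {ω ω' : ℂ → ℂ} {ω'' z₀ : ℂ}

lemma one_le_re_mul_deriv_mul_conj (hω : ∀ z ∈ closedBall (0 : ℂ) ‖z₀‖, HasDerivAt ω (ω' z) z)
    (hω0 : ω 0 = 0) (hmaps : MapsTo ω (closedBall 0 ‖z₀‖) (closedBall 0 1))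
    (hωz₀ : ‖ω z₀‖ = 1) : 1 ≤ (z₀ * ω' z₀ * conj (ω z₀)).re := by
  have hr : 0 < ‖z₀‖ := norm_pos_iff.2 fun h => by simp [h, hω0] at hωz₀
  have hschwarz : ∀ t ∈ Ioo (0 : ℝ) 1, ‖ω (t * z₀)‖ ^ 2 ≤ t ^ 2 := by
    intro t ht
    have hnorm : ‖(t : ℂ) * z₀‖ = t * ‖z₀‖ := by
      rw [norm_mul, norm_real, Real.norm_of_nonneg ht.1.le]
    have hmem : (t : ℂ) * z₀ ∈ ball 0 ‖z₀‖ := by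
      rw [mem_ball_zero_iff, hnorm]
      exact mul_lt_of_lt_one_left hr ht.2
    have := dist_le_div_mul_dist_of_mapsTo_ball
      (fun z hz => (hω z (ball_subset_closedBall hz)).differentiableAt.differentiableWithinAt)
      (by rw [hω0]; exact hmaps.mono_left ball_subset_closedBall) hmem
    rw [hω0, dist_zero_right, dist_zero_right, hnorm, one_div_mul_eq_div,
      mul_div_cancel_right₀ _ hr.ne'] at this
    gcongr
  have hline : HasDerivAt (fun t : ℝ => (t : ℂ) * z₀) z₀ 1 := by
    simpa using (hasDerivAt_id (1 : ℝ)).ofReal_comp.mul_const z₀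
  have hωz : HasDerivAt ω (ω' z₀) ((1 : ℝ) * z₀) := by
    rw [ofReal_one, one_mul]
    exact hω z₀ (mem_closedBall_zero_iff.2 le_rfl)
  have hsq := (hωz.scomp 1 hline).norm_sq
  simp only [Function.comp_def, ofReal_one, one_mul, smul_eq_mul, Complex.inner] at hsq
  have := le_of_hasDerivAt_of_le_nhdsLT hsq (hasDerivAt_pow 2 1)
    (mem_of_superset (Ioo_mem_nhdsLT one_pos) hschwarz) (by simp [hωz₀])
  norm_num only at this
  linarith

lemma im_mul_deriv_mul_conj_eq_zero_and_norm_sq_le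
    (hω : ∀ z ∈ sphere (0 : ℂ) ‖z₀‖, HasDerivAt ω (ω' z) z) (hω' : HasDerivAt ω' ω'' z₀)
    (hmaps : MapsTo ω (sphere 0 ‖z₀‖) (closedBall 0 1)) (hωz₀ : ‖ω z₀‖ = 1) :
    (z₀ * ω' z₀ * conj (ω z₀)).im = 0 ∧
      ‖z₀ * ω' z₀‖ ^ 2 ≤ (z₀ * ω' z₀ * conj (ω z₀)).re + (z₀ ^ 2 * ω'' * conj (ω z₀)).re := by
  set γ := circleMap 0 ‖z₀‖
  have hγ : ∀ θ, γ θ ∈ sphere 0 ‖z₀‖ := fun θ => by simp [γ]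
  have hγz₀ : γ (arg z₀) = z₀ := by simp [γ, circleMap_zero, norm_mul_exp_arg_mul_I]
  set u' : ℝ → ℂ := fun θ => γ θ * I * ω' (γ θ)
  have hu : ∀ θ, HasDerivAt (ω ∘ γ) (u' θ) θ := fun θ => by
    simpa using (hω _ (hγ θ)).scomp θ (hasDerivAt_circleMap 0 ‖z₀‖ θ)
  have hu' : HasDerivAt u' (z₀ * I * I * ω' z₀ + z₀ * I * (z₀ * I * ω'')) (arg z₀) := by
    have hγ' : HasDerivAt γ (γ (arg z₀) * I) (arg z₀) := hasDerivAt_circleMap 0 ‖z₀‖ (arg z₀)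
    have hω'γ : HasDerivAt ω' ω'' (γ (arg z₀)) := by rwa [hγz₀]
    have := (hγ'.mul_const I).mul (hω'γ.scomp (arg z₀) hγ')
    simp only [Function.comp_apply, hγz₀, smul_eq_mul] at this
    exact this
  have hmax : IsLocalMax (‖(ω ∘ γ) ·‖) (arg z₀) := .of_forall fun θ => by
    simpa [hγz₀, hωz₀] using hmaps (hγ θ)
  have h1 := inner_deriv_eq_zero_of_isLocalMax_norm hmax (hu _)
  have h2 := inner_deriv2_add_norm_sq_nonpos_of_isLocalMax_norm hmax (.of_forall hu) hu'
  simp only [Function.comp_apply, hγz₀, Complex.inner, u'] at h1 h2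
  have e1 : z₀ * I * ω' z₀ * conj (ω z₀) = I * (z₀ * ω' z₀ * conj (ω z₀)) := by ring
  have e2 : (z₀ * I * I * ω' z₀ + z₀ * I * (z₀ * I * ω'')) * conj (ω z₀) =
      -(z₀ * ω' z₀ * conj (ω z₀)) - z₀ ^ 2 * ω'' * conj (ω z₀) := by
    linear_combination (z₀ * ω' z₀ * conj (ω z₀) + z₀ ^ 2 * ω'' * conj (ω z₀)) * I_mul_I
  have e3 : ‖z₀ * I * ω' z₀‖ = ‖z₀ * ω' z₀‖ := by rw [mul_right_comm, norm_mul, norm_I, mul_one]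
  rw [e1, I_mul_re, neg_eq_zero] at h1
  rw [e2, e3, sub_re, neg_re] at h2
  exact ⟨h1, by linarith⟩

/-- Jack's lemma, with the second-order condition of Miller and Mocanu. -/
theorem jack_lemma_s1 (hω : ∀ z ∈ closedBall (0 : ℂ) ‖z₀‖, HasDerivAt ω (ω' z) z)
    (hω' : HasDerivAt ω' ω'' z₀) (hω0 : ω 0 = 0)
    (hmaps : MapsTo ω (closedBall 0 ‖z₀‖) (closedBall 0 1)) (hωz₀ : ‖ω z₀‖ = 1) :
    ∃ m : ℝ, 1 ≤ m ∧ z₀ * ω' z₀ = m * ω z₀ ∧ m ^ 2 - m ≤ (z₀ ^ 2 * ω'' * conj (ω z₀)).re := by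
  set μ := z₀ * ω' z₀ * conj (ω z₀)
  have hradial : 1 ≤ μ.re := one_le_re_mul_deriv_mul_conj hω hω0 hmaps hωz₀
  obtain ⟨him, hsecond⟩ := im_mul_deriv_mul_conj_eq_zero_and_norm_sq_le
    (fun z hz => hω z (sphere_subset_closedBall hz)) hω' (hmaps.mono_left sphere_subset_closedBall)
    hωz₀
  have hμ : (μ.re : ℂ) = μ := ext (ofReal_re _) (by rw [ofReal_im, him])
  have hd : z₀ * ω' z₀ = μ.re * ω z₀ := by
    rw [hμ, mul_assoc, conj_mul', hωz₀]
    simp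
  have hnorm : ‖z₀ * ω' z₀‖ = μ.re := by
    rw [hd, norm_mul, norm_real, hωz₀, mul_one, Real.norm_of_nonneg (by linarith)]
  refine ⟨μ.re, hradial, hd, ?_⟩
  rw [hnorm] at hsecond
  linarith

end JackLemma

lemma kummer_riccati_ne {a c z p q ζ : ℂ} {m : ℝ} (h : ‖a‖ + 2 ≤ c.re) (hz : ‖z‖ < 1)
    (hζ : ‖ζ‖ = 1) (hm : 1 ≤ m) (hp : p = m * ζ) (hq : m ^ 2 - m ≤ (q * conj ζ).re) :
    q + p ^ 2 + (c - z) * p ≠ a * z := by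
  intro hode
  have hζζ : ζ * conj ζ = 1 := by rw [mul_conj', hζ]; simp
  have hq' : q * conj ζ = a * z * conj ζ - m ^ 2 * ζ - m * (c - z) := by
    subst hp
    linear_combination conj ζ * hode - (m ^ 2 * ζ + m * (c - z)) * hζζ
  have hre : (q * conj ζ).re = (a * z * conj ζ).re - m ^ 2 * ζ.re - m * (c.re - z.re) := by
    rw [hq', sub_re, sub_re, ← ofReal_pow, re_ofReal_mul, re_ofReal_mul, sub_re]
  have haz : (a * z * conj ζ).re ≤ ‖a‖ * ‖z‖ :=
    (re_le_norm _).trans_eq (by rw [norm_mul, norm_mul, norm_conj, hζ, mul_one])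
  have hζre : -1 ≤ ζ.re := neg_le_of_abs_le (hζ ▸ abs_re_le_norm ζ)
  have hzre : z.re ≤ ‖z‖ := re_le_norm z
  nlinarith [mul_le_mul_of_nonneg_left hzre (by linarith : (0:ℝ) ≤ m),
    mul_le_mul_of_nonneg_left h (by linarith : (0:ℝ) ≤ m),
    mul_le_mul_of_nonneg_left hζre (sq_nonneg m),
    mul_le_mul_of_nonneg_left (hz.le.trans hm) (norm_nonneg a),
    mul_lt_mul_of_pos_left hz (by linarith : (0:ℝ) < m)]

section ExpDisk

lemma log_exp_of_norm_le_one {ζ : ℂ} (h : ‖ζ‖ ≤ 1) : log (exp ζ) = ζ := by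
  have := abs_le.1 ((abs_im_le_norm ζ).trans h)
  exact log_exp (by linarith [Real.pi_gt_three]) (by linarith [Real.pi_gt_three])

lemma mem_exp_ball_iff {w : ℂ} : w ∈ exp '' ball 0 1 ↔ w ≠ 0 ∧ ‖log w‖ < 1 := by
  refine ⟨?_, fun h => ⟨log w, mem_ball_zero_iff.2 h.2, exp_log h.1⟩⟩
  rintro ⟨ζ, hζ, rfl⟩
  rw [mem_ball_zero_iff] at hζ
  exact ⟨exp_ne_zero ζ, by rwa [log_exp_of_norm_le_one hζ.le]⟩

lemma norm_log_le_one_of_mem_exp_closedBall {w : ℂ} (hw : w ∈ exp '' closedBall 0 1) :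
    ‖log w‖ ≤ 1 := by
  obtain ⟨ζ, hζ, rfl⟩ := hw
  rw [mem_closedBall_zero_iff] at hζ
  rwa [log_exp_of_norm_le_one hζ]

lemma exp_closedBall_subset_slitPlane : exp '' closedBall (0 : ℂ) 1 ⊆ slitPlane := by
  rintro _ ⟨ζ, hζ, rfl⟩
  have := abs_le.1 ((abs_im_le_norm ζ).trans (mem_closedBall_zero_iff.1 hζ))
  refine mem_slitPlane_iff.2 (Or.inl ?_)
  rw [exp_re]
  exact mul_pos (Real.exp_pos _)
    (Real.cos_pos_of_mem_Ioo ⟨by linarith [Real.pi_gt_three], by linarith [Real.pi_gt_three]⟩)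

lemma closure_exp_ball_subset : closure (exp '' ball (0 : ℂ) 1) ⊆ exp '' closedBall 0 1 :=
  closure_minimal (image_mono ball_subset_closedBall)
    ((isCompact_closedBall 0 1).image continuous_exp).isClosed

end ExpDisk

lemma exists_notMem_mapsTo_closedBall_closure {E X : Type*} [NormedAddCommGroup E]
    [NormedSpace ℝ E] [ProperSpace E] [TopologicalSpace X] {f : E → X} (hf : Continuous f)
    {V : Set X} (hV : IsOpen V) (h0 : f 0 ∈ V) {z : E} (hz : f z ∉ V) :
    ∃ z₀, ‖z₀‖ ≤ ‖z‖ ∧ f z₀ ∉ V ∧ MapsTo f (closedBall 0 ‖z₀‖) (closure V) := by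
  have hK : IsCompact (closedBall (0 : E) ‖z‖ ∩ f ⁻¹' Vᶜ) :=
    (isCompact_closedBall _ _).inter_right (hV.isClosed_compl.preimage hf)
  obtain ⟨z₀, ⟨hz₀, hz₀V⟩, hmin⟩ :=
    hK.exists_isMinOn ⟨z, mem_closedBall_zero_iff.2 le_rfl, hz⟩ continuous_norm.continuousOn
  rw [mem_closedBall_zero_iff] at hz₀
  have hz₀ne : z₀ ≠ 0 := by rintro rfl; exact hz₀V h0
  refine ⟨z₀, hz₀, hz₀V, ?_⟩
  rw [← closure_ball 0 (norm_ne_zero_iff.2 hz₀ne)]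
  refine MapsTo.closure (fun w hw => ?_) hf
  rw [mem_ball_zero_iff] at hw
  by_contra hwV
  exact hw.not_ge (hmin ⟨mem_closedBall_zero_iff.2 (hw.le.trans hz₀), hwV⟩)

theorem confluent_memPe_general (a c : ℂ)
    (h : ‖a‖ + 2 ≤ c.re) :
    memPe (fun z => Phi a c z) := by
  obtain ⟨Φ', Φ'', hΦ, hΦ', hode⟩ := Phi_kummer (a := a) (c := c) (by linarith)
  have hΦc : Continuous (Phi a c) := continuous_iff_continuousAt.2 fun z => (hΦ z).continuousAt
  refine ⟨DifferentiableOn.analyticOnNhd (fun z _ => (hΦ z).differentiableAt.differentiableWithinAt)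
    isOpen_ball, Phi_zero a c, fun z hz => ?_⟩
  by_contra hbad
  obtain ⟨z₀, hz₀z, hz₀V, hmaps⟩ := exists_notMem_mapsTo_closedBall_closure hΦc
    (isOpenMap_exp _ isOpen_ball) (mem_exp_ball_iff.2 (by simp [Phi_zero])) hbad
  replace hmaps := hmaps.mono_right closure_exp_ball_subset
  have hslit : MapsTo (Phi a c) (closedBall 0 ‖z₀‖) slitPlane :=
    hmaps.mono_right exp_closedBall_subset_slitPlane
  have hz₀mem : z₀ ∈ closedBall (0 : ℂ) ‖z₀‖ := mem_closedBall_zero_iff.2 le_rfl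
  have hΦz₀ : Phi a c z₀ ≠ 0 := slitPlane_ne_zero (hslit hz₀mem)
  have hlog : ‖log (Phi a c z₀)‖ = 1 :=
    le_antisymm (norm_log_le_one_of_mem_exp_closedBall (hmaps hz₀mem))
      (not_lt.1 fun hlt => hz₀V (mem_exp_ball_iff.2 ⟨hΦz₀, hlt⟩))
  obtain ⟨m, hm, hp, hq⟩ := jack_lemma_s1 (ω := fun w => log (Phi a c w))
    (fun w hw => (hΦ w).clog (hslit hw)) ((hΦ' z₀).div (hΦ z₀) hΦz₀) (by simp [Phi_zero])
    (fun w hw => mem_closedBall_zero_iff.2 (norm_log_le_one_of_mem_exp_closedBall (hmaps hw))) hlog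
  refine kummer_riccati_ne h (hz₀z.trans_lt (mem_ball_zero_iff.1 hz)) hlog hm hp hq ?_
  field_simp
  linear_combination z₀ * Phi a c z₀ * hode z₀

/-- If `c` is not zero or a negative integer and `Re(c) ≥ |a| + 2`, then
`z ↦ Φ(a;c;z)` belongs to `P_e`. -/
theorem confluent_memPe (a c : ℂ) (hc : ∀ n : ℕ, c ≠ -(n : ℂ))
    (h : ‖a‖ + 2 ≤ c.re) :
    memPe (fun z => Phi a c z) :=
  confluent_memPe_general a c h
end

section
/- Let μ, ν ∈ ℝ be such that μ+ν and μ−ν are not negative odd integers, and set M = (μ+5)² − ν² and N = (μ+3)² − ν². Suppose μ > −5 + (3/2 + ν²)^{1/2}, 4M/N < 2M − 3, and μ(1 + 2 sin 1) − (1/4)e(e−1)|(μ+1)(μ−7) − ν²| ≥ e⁴ − 3e³ + 13e²/4 − 3e/4 − 3/e + 2 − 2 sin 1. Then the normalized Lommel function h_{μ,ν} belongs to the class K_e of exponential convex functions. -/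
open Complex Metric Set

/-- The normalized Lommel function of the first kind
`h_{μ,ν}(z) = z + ∑_{n≥1} ((−1/4)^n / (((μ−ν+3)/2)_n ((μ+ν+3)/2)_n)) z^{n+1}`. -/
noncomputable def lommelH (μ ν : ℝ) (z : ℂ) : ℂ :=
  z + ∑' n : ℕ, (-1/4 : ℂ) ^ (n + 1) /
    (poch (((μ - ν + 3) / 2 : ℝ) : ℂ) (n + 1) * poch (((μ + ν + 3) / 2 : ℝ) : ℂ) (n + 1)) *
      z ^ (n + 2)

/-!
Hypothesis `h3` forces `μ ≥ 14/3` and `(μ + 3)² - ν² ≥ 20`, so both Pochhammer parameters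
`a = (μ - ν + 3)/2` and `b = (μ + ν + 3)/2` are positive with `ab ≥ 5`. Then the coefficient of
`z^(n+2)` in `h_{μ,ν}` has modulus at most `(4ab)^-(n+1) ≤ 20^-(n+1)`. Coefficients this small keep
`h'` within `1/2` of `1` and `|h''| ≤ 1/4` on the disk, so `q = z h''/h'` satisfies `|q| ≤ 1/2`,
and `1 + q = exp (log (1 + q))` with `|log (1 + q)| ≤ 3|q|/2 < 1`.
-/

lemma memPe_one_add_of_norm_le_half {q : ℂ → ℂ} (hq : AnalyticOnNhd ℂ q (ball 0 1))
    (hq0 : q 0 = 0) (hle : ∀ z ∈ ball (0 : ℂ) 1, ‖q z‖ ≤ 1 / 2) :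
    memPe fun z => 1 + q z := by
  refine ⟨analyticOnNhd_const.add hq, by simp [hq0], fun z hz => ?_⟩
  have hne : 1 + q z ≠ 0 := by
    intro h
    have := hle z hz
    rw [show q z = -1 by linear_combination h] at this
    norm_num at this
  refine ⟨log (1 + q z), ?_, exp_log hne⟩
  rw [mem_ball_zero_iff]
  calc ‖log (1 + q z)‖ ≤ 3 / 2 * ‖q z‖ := norm_log_one_add_half_le_self (hle z hz)
    _ ≤ 3 / 2 * (1 / 2) := by gcongr; exact hle z hz
    _ < 1 := by norm_num

lemma memKe_of_norm_deriv_le {f : ℂ → ℂ} (hf : AnalyticOnNhd ℂ f (ball 0 1)) (hf0 : f 0 = 0)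
    (hf'0 : deriv f 0 = 1) (hf' : ∀ z ∈ ball (0 : ℂ) 1, ‖deriv f z - 1‖ ≤ 1 / 2)
    (hf'' : ∀ z ∈ ball (0 : ℂ) 1, ‖deriv (deriv f) z‖ ≤ 1 / 4) : memKe f := by
  have hf'_ge : ∀ z ∈ ball (0 : ℂ) 1, 1 / 2 ≤ ‖deriv f z‖ := fun z hz => by
    have := norm_sub_norm_le (1 : ℂ) (deriv f z)
    rw [norm_sub_rev] at this
    linarith [hf' z hz, norm_one (α := ℂ)]
  have hf'_ne : ∀ z ∈ ball (0 : ℂ) 1, deriv f z ≠ 0 := fun z hz h => by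
    have := hf'_ge z hz
    rw [h, norm_zero] at this
    norm_num at this
  refine ⟨hf, hf0, hf'0, hf'_ne, memPe_one_add_of_norm_le_half ?_ (by simp) fun z hz => ?_⟩
  · exact fun z hz =>
      (analyticAt_id.mul (hf.deriv.deriv z hz)).div (hf.deriv z hz) (hf'_ne z hz)
  · have hz1 : ‖z‖ < 1 := mem_ball_zero_iff.1 hz
    rw [norm_div, norm_mul, div_le_iff₀ (by linarith [hf'_ge z hz])]
    calc ‖z‖ * ‖deriv (deriv f) z‖ ≤ 1 * (1 / 4) :=
          mul_le_mul hz1.le (hf'' z hz) (norm_nonneg _) zero_le_one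
      _ ≤ 1 / 2 * ‖deriv f z‖ := by linarith [hf'_ge z hz]

lemma norm_mul_pow_le_of_mem_ball {b z : ℂ} (hz : z ∈ ball (0 : ℂ) 1) (m : ℕ) :
    ‖b * z ^ m‖ ≤ ‖b‖ := by
  rw [norm_mul, norm_pow]
  exact mul_le_of_le_one_right (norm_nonneg b)
    (pow_le_one₀ (norm_nonneg z) (mem_ball_zero_iff.1 hz).le)

lemma hasDerivAt_tsum_mul_pow {c : ℕ → ℂ} {k : ℕ}
    (hc : Summable fun n => ‖((n + k + 1 : ℕ) : ℂ) * c n‖) {z : ℂ} (hz : z ∈ ball (0 : ℂ) 1) :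
    HasDerivAt (fun w => ∑' n, c n * w ^ (n + k + 1))
      (∑' n, ((n + k + 1 : ℕ) : ℂ) * c n * z ^ (n + k)) z := by
  refine hasDerivAt_tsum_of_isPreconnected (g := fun n w => c n * w ^ (n + k + 1))
    (g' := fun n w => ((n + k + 1 : ℕ) : ℂ) * c n * w ^ (n + k)) hc isOpen_ball
    (convex_ball 0 1).isPreconnected (fun n w _ => ?_)
    (fun n w hw => norm_mul_pow_le_of_mem_ball hw _) (mem_ball_self one_pos) (by simp) hz
  refine ((hasDerivAt_pow (n + k + 1) w).const_mul (c n)).congr_deriv ?_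
  rw [Nat.add_sub_cancel]
  ring

lemma hasSum_pow_succ {r : ℝ} (hr0 : 0 ≤ r) (hr1 : r < 1) :
    HasSum (fun n => r ^ (n + 1)) (r / (1 - r)) := by
  simpa [pow_succ', div_eq_mul_inv] using (hasSum_geometric_of_lt_one hr0 hr1).mul_left r

lemma summable_norm_of_norm_le_pow_succ {f : ℕ → ℂ} {r : ℝ} (hr0 : 0 ≤ r) (hr1 : r < 1)
    (hf : ∀ n, ‖f n‖ ≤ r ^ (n + 1)) : Summable fun n => ‖f n‖ :=
  (hasSum_pow_succ hr0 hr1).summable.of_nonneg_of_le (fun _ => norm_nonneg _) hf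

lemma norm_tsum_le_of_norm_le_pow_succ {f : ℕ → ℂ} {r : ℝ} (hr0 : 0 ≤ r) (hr1 : r < 1)
    (hf : ∀ n, ‖f n‖ ≤ r ^ (n + 1)) : ‖∑' n, f n‖ ≤ r / (1 - r) :=
  tsum_of_norm_bounded (hasSum_pow_succ hr0 hr1) hf

lemma norm_natCast_mul_le_two_mul_pow {b : ℂ} {r : ℝ} {n j : ℕ} (hj : j ≤ 2)
    (hb : ‖b‖ ≤ r ^ (n + 1)) : ‖((n + j : ℕ) : ℂ) * b‖ ≤ (2 * r) ^ (n + 1) := by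
  have hnj : ((n + j : ℕ) : ℝ) ≤ 2 ^ (n + 1) := by
    exact_mod_cast (show n + j ≤ n + 1 + 1 by omega).trans Nat.lt_two_pow_self
  rw [norm_mul, Complex.norm_natCast, mul_pow]
  exact mul_le_mul hnj hb (norm_nonneg b) (by positivity)

lemma memKe_id_add_tsum_mul_pow {A : ℕ → ℂ} {r : ℝ} (hr : r ≤ 1 / 20)
    (hA : ∀ n, ‖A n‖ ≤ r ^ (n + 1)) : memKe fun z => z + ∑' n, A n * z ^ (n + 2) := by
  have hr0 : 0 ≤ r := (norm_nonneg _).trans ((hA 0).trans_eq (pow_one r))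
  -- exponents written `n + k + 1` to match `hasDerivAt_tsum_mul_pow` with `k = 1` and `k = 0`
  have hB1 : ∀ n, ‖((n + 1 + 1 : ℕ) : ℂ) * A n‖ ≤ (2 * r) ^ (n + 1) := fun n =>
    norm_natCast_mul_le_two_mul_pow le_rfl (hA n)
  have hB2 : ∀ n, ‖((n + 0 + 1 : ℕ) : ℂ) * (((n + 1 + 1 : ℕ) : ℂ) * A n)‖ ≤
      (2 * (2 * r)) ^ (n + 1) := fun n =>
    norm_natCast_mul_le_two_mul_pow (by norm_num) (hB1 n)
  set f : ℂ → ℂ := fun z => z + ∑' n, A n * z ^ (n + 2)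
  set g : ℂ → ℂ := fun z => 1 + ∑' n, ((n + 1 + 1 : ℕ) : ℂ) * A n * z ^ (n + 1)
  have hf : ∀ z ∈ ball (0 : ℂ) 1, HasDerivAt f (g z) z := fun z hz =>
    (hasDerivAt_id z).add (hasDerivAt_tsum_mul_pow (k := 1)
      (summable_norm_of_norm_le_pow_succ (by positivity) (by linarith) hB1) hz)
  have hg : ∀ z ∈ ball (0 : ℂ) 1, HasDerivAt g
      (∑' n, ((n + 0 + 1 : ℕ) : ℂ) * (((n + 1 + 1 : ℕ) : ℂ) * A n) * z ^ (n + 0)) z :=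
    fun z hz => (hasDerivAt_tsum_mul_pow (k := 0)
      (summable_norm_of_norm_le_pow_succ (by positivity) (by linarith) hB2) hz).const_add 1
  have hf' : ∀ z ∈ ball (0 : ℂ) 1, deriv f z = g z := fun z hz => (hf z hz).deriv
  have hf'' : ∀ z ∈ ball (0 : ℂ) 1, deriv (deriv f) z =
      ∑' n, ((n + 0 + 1 : ℕ) : ℂ) * (((n + 1 + 1 : ℕ) : ℂ) * A n) * z ^ (n + 0) := fun z hz =>
    (Filter.eventuallyEq_of_mem (isOpen_ball.mem_nhds hz) hf').deriv_eq.trans (hg z hz).deriv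
  refine memKe_of_norm_deriv_le ?_ (by simp [f]) ?_ (fun z hz => ?_) (fun z hz => ?_)
  · exact DifferentiableOn.analyticOnNhd
      (fun z hz => (hf z hz).differentiableAt.differentiableWithinAt) isOpen_ball
  · simp [hf' 0 (mem_ball_self one_pos), g]
  · rw [hf' z hz, add_sub_cancel_left]
    calc _ ≤ 2 * r / (1 - 2 * r) := norm_tsum_le_of_norm_le_pow_succ (by positivity)
          (by linarith) fun n => (norm_mul_pow_le_of_mem_ball hz _).trans (hB1 n)
      _ ≤ 1 / 2 := by rw [div_le_iff₀ (by linarith)]; linarith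
  · rw [hf'' z hz]
    calc _ ≤ 2 * (2 * r) / (1 - 2 * (2 * r)) := norm_tsum_le_of_norm_le_pow_succ
          (by positivity) (by linarith) fun n => (norm_mul_pow_le_of_mem_ball hz _).trans (hB2 n)
      _ ≤ 1 / 4 := by rw [div_le_iff₀ (by linarith)]; linarith

lemma pow_le_norm_poch {a : ℝ} (ha : 0 ≤ a) (m : ℕ) : a ^ m ≤ ‖poch (a : ℂ) m‖ := by
  rw [poch, norm_prod]
  calc a ^ m = ∏ _k ∈ Finset.range m, a := by simp
    _ ≤ ∏ k ∈ Finset.range m, ‖(a : ℂ) + k‖ := by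
      refine Finset.prod_le_prod (fun _ _ => ha) fun k _ => ?_
      rw [show (a : ℂ) + k = ((a + k : ℝ) : ℂ) by push_cast; rfl, Complex.norm_real,
        Real.norm_of_nonneg (by positivity)]
      linarith [(Nat.cast_nonneg k : (0 : ℝ) ≤ k)]

lemma norm_neg_quarter_pow_div_poch_mul_poch_le {a b : ℝ} (ha : 0 < a) (hb : 0 < b) (m : ℕ) :
    ‖(-1 / 4 : ℂ) ^ m / (poch (a : ℂ) m * poch (b : ℂ) m)‖ ≤ (1 / (4 * a * b)) ^ m := by
  have hpoch : (a * b) ^ m ≤ ‖poch (a : ℂ) m * poch (b : ℂ) m‖ := by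
    rw [mul_pow, norm_mul]
    exact mul_le_mul (pow_le_norm_poch ha.le m) (pow_le_norm_poch hb.le m) (by positivity)
      (norm_nonneg _)
  have hquarter : ‖(-1 / 4 : ℂ)‖ = 1 / 4 := by norm_num
  rw [norm_div, norm_pow, hquarter,
    div_le_iff₀ ((by positivity : 0 < (a * b) ^ m).trans_le hpoch)]
  calc (1 / 4 : ℝ) ^ m = (1 / (4 * a * b)) ^ m * (a * b) ^ m := by
        rw [← mul_pow]; congr 1; field_simp
    _ ≤ _ := by gcongr

lemma seventeen_le_exp_one_poly :
    17 ≤ Real.exp 1 ^ 4 - 3 * Real.exp 1 ^ 3 + 13 * Real.exp 1 ^ 2 / 4 - 3 * Real.exp 1 / 4 -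
      3 / Real.exp 1 + 3 := by
  have hlo := Real.exp_one_gt_d9
  have hhi := Real.exp_one_lt_d9
  have hinv : 3 / Real.exp 1 ≤ 1.2 := by rw [div_le_iff₀ (by linarith)]; linarith
  have he : 0 < Real.exp 1 - 2.7 := by linarith
  nlinarith [sq_nonneg (Real.exp 1 - 2.7182818283), mul_pos he he]

lemma seventeen_add_abs_le_three_mul_succ {μ ν : ℝ}
    (h3 : μ * (1 + 2 * Real.sin 1) -
        (1 / 4) * Real.exp 1 * (Real.exp 1 - 1) * |(μ + 1) * (μ - 7) - ν ^ 2| ≥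
      (Real.exp 1) ^ 4 - 3 * (Real.exp 1) ^ 3 + 13 * (Real.exp 1) ^ 2 / 4 -
        3 * Real.exp 1 / 4 - 3 / Real.exp 1 + 2 - 2 * Real.sin 1) :
    17 + |(μ + 1) * (μ - 7) - ν ^ 2| ≤ 3 * (μ + 1) := by
  have hsin_pos : 0 < Real.sin 1 :=
    Real.sin_pos_of_pos_of_lt_pi one_pos (by linarith [Real.pi_gt_three])
  have hsin_le := Real.sin_le_one 1
  have hκ : 1 ≤ 1 / 4 * Real.exp 1 * (Real.exp 1 - 1) := by
    nlinarith [Real.exp_one_gt_d9]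
  have habs := abs_nonneg ((μ + 1) * (μ - 7) - ν ^ 2)
  -- `h3` reads `(1 + 2 sin 1) (μ + 1) ≥ P + κ |X|` with `P ≥ 17` and `κ ≥ 1`
  have hmain : 17 + |(μ + 1) * (μ - 7) - ν ^ 2| ≤ (1 + 2 * Real.sin 1) * (μ + 1) := by
    nlinarith [seventeen_le_exp_one_poly]
  have hμ : 0 < μ + 1 := by nlinarith
  nlinarith

lemma lommel_params_of_add_abs_le {μ ν : ℝ}
    (h : 17 + |(μ + 1) * (μ - 7) - ν ^ 2| ≤ 3 * (μ + 1)) :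
    0 < (μ - ν + 3) / 2 ∧ 0 < (μ + ν + 3) / 2 ∧ 5 ≤ (μ - ν + 3) / 2 * ((μ + ν + 3) / 2) := by
  have hX := neg_abs_le ((μ + 1) * (μ - 7) - ν ^ 2)
  have hμ : 14 / 3 ≤ μ := by linarith [abs_nonneg ((μ + 1) * (μ - 7) - ν ^ 2)]
  have hprod : 5 ≤ (μ - ν + 3) / 2 * ((μ + ν + 3) / 2) := by nlinarith
  refine ⟨?_, ?_, hprod⟩ <;> nlinarith

theorem lommel_exponential_convex_general (μ ν : ℝ)
    (h3 : μ * (1 + 2 * Real.sin 1) -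
        (1 / 4) * Real.exp 1 * (Real.exp 1 - 1) * |(μ + 1) * (μ - 7) - ν ^ 2| ≥
      (Real.exp 1) ^ 4 - 3 * (Real.exp 1) ^ 3 + 13 * (Real.exp 1) ^ 2 / 4 -
        3 * Real.exp 1 / 4 - 3 / Real.exp 1 + 2 - 2 * Real.sin 1) :
    memKe (lommelH μ ν) := by
  obtain ⟨ha, hb, hab⟩ :=
    lommel_params_of_add_abs_le (seventeen_add_abs_le_three_mul_succ h3)
  have hr : 1 / (4 * ((μ - ν + 3) / 2) * ((μ + ν + 3) / 2)) ≤ 1 / 20 := by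
    rw [mul_assoc]
    exact one_div_le_one_div_of_le (by norm_num) (by linarith)
  exact memKe_id_add_tsum_mul_pow hr fun n =>
    norm_neg_quarter_pow_div_poch_mul_poch_le ha hb (n + 1)

/-- Sufficient condition for the normalized Lommel function `h_{μ,ν}` to be
exponential convex. -/
theorem lommel_exponential_convex (μ ν : ℝ)
    (hodd : ∀ k : ℕ, μ + ν ≠ -(2 * (k : ℝ) + 1) ∧ μ - ν ≠ -(2 * (k : ℝ) + 1))
    (h1 : μ > -5 + Real.sqrt (3 / 2 + ν ^ 2))
    (h2 : 4 * ((μ + 5) ^ 2 - ν ^ 2) / ((μ + 3) ^ 2 - ν ^ 2) < 2 * ((μ + 5) ^ 2 - ν ^ 2) - 3)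
    (h3 : μ * (1 + 2 * Real.sin 1) -
        (1 / 4) * Real.exp 1 * (Real.exp 1 - 1) * |(μ + 1) * (μ - 7) - ν ^ 2| ≥
      (Real.exp 1) ^ 4 - 3 * (Real.exp 1) ^ 3 + 13 * (Real.exp 1) ^ 2 / 4 -
        3 * Real.exp 1 / 4 - 3 / Real.exp 1 + 2 - 2 * Real.sin 1) :
    memKe (lommelH μ ν) :=
  lommel_exponential_convex_general μ ν h3
end

section
/- Let μ, ν ∈ ℂ be such that μ+ν and μ−ν are not negative odd integers, and suppose 4 Re(μ) ≥ (e−1)|(μ+1)² − ν²| − 3. Then the function z ↦ h_{μ,ν}(z)/z (with value 1 at z = 0), i.e. z ↦ 1 + ∑_{n≥1} ((−1/4)^n / (((μ−ν+3)/2)_n ((μ+ν+3)/2)_n)) z^n, belongs to the class P_e. -/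
open Complex Metric Set

/-!
With `a, b = (μ ∓ ν + 3)/2`, the `k`-th factor of `poch a n * poch b n` is
`(a + k)(b + k) = (k+1)(μ+1) + (k+1)² + ((μ+1)² - ν²)/4`. As `e - 1 ≥ 1`, the hypothesis gives
`‖(μ+1)² - ν²‖ ≤ 4 Re μ + 3`, and then every factor has real part at least `5/4`. So the `n`-th
coefficient of `h_{μ,ν}(z)/z` has norm at most `(1/5)^n`, the series differs from `1` by at most
`1/4` on the disk, and on `‖w - 1‖ ≤ 1/2` the principal logarithm has norm at most `3/4 < 1`.
-/

theorem mem_exp_image_ball_of_norm_sub_one_le {w : ℂ} (hw : ‖w - 1‖ ≤ 1 / 2) :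
    w ∈ exp '' ball 0 1 := by
  have hw0 : w ≠ 0 := by
    rintro rfl
    norm_num at hw
  refine ⟨log w, mem_ball_zero_iff.mpr ?_, exp_log hw0⟩
  calc ‖log w‖ = ‖log (1 + (w - 1))‖ := by rw [add_sub_cancel]
    _ ≤ 3 / 2 * ‖w - 1‖ := norm_log_one_add_half_le_self hw
    _ < 1 := by linarith

section PowerSeries

variable {c : ℕ → ℂ} {u : ℕ → ℝ}

theorem norm_coeff_mul_pow_succ_le (hc : ∀ n, ‖c n‖ ≤ u n) {z : ℂ} (hz : ‖z‖ ≤ 1) (n : ℕ) :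
    ‖c n * z ^ (n + 1)‖ ≤ u n := by
  rw [norm_mul, norm_pow]
  exact (mul_le_of_le_one_right (norm_nonneg _) (pow_le_one₀ (norm_nonneg z) hz)).trans (hc n)

theorem analyticOnNhd_tsum_coeff_mul_pow_succ (hc : ∀ n, ‖c n‖ ≤ u n) (hu : Summable u) :
    AnalyticOnNhd ℂ (fun z => ∑' n, c n * z ^ (n + 1)) (ball 0 1) := by
  refine (differentiableOn_tsum_of_summable_norm hu (fun n => ?_) isOpen_ball
    fun n _ hz => norm_coeff_mul_pow_succ_le hc (mem_ball_zero_iff.mp hz).le n).analyticOnNhd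
    isOpen_ball
  fun_prop

theorem memPe_of_norm_coeff_le (hc : ∀ n, ‖c n‖ ≤ u n) (hu : Summable u)
    (hu_half : ∑' n, u n ≤ 1 / 2) :
    memPe (fun z => 1 + ∑' n, c n * z ^ (n + 1)) := by
  refine ⟨analyticOnNhd_const.add (analyticOnNhd_tsum_coeff_mul_pow_succ hc hu), by simp,
    fun z hz => mem_exp_image_ball_of_norm_sub_one_le ?_⟩
  rw [add_sub_cancel_left]
  exact (tsum_of_norm_bounded hu.hasSum
    (norm_coeff_mul_pow_succ_le hc (mem_ball_zero_iff.mp hz).le)).trans hu_half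

end PowerSeries

section Lommel

variable {μ ν : ℂ}

theorem five_fourths_le_norm_lommel_factor (hμν : ‖(μ + 1) ^ 2 - ν ^ 2‖ ≤ 4 * μ.re + 3)
    (k : ℕ) : 5 / 4 ≤ ‖((μ - ν + 3) / 2 + k) * ((μ + ν + 3) / 2 + k)‖ := by
  set D := (μ + 1) ^ 2 - ν ^ 2
  have hfactor : ((μ - ν + 3) / 2 + k) * ((μ + ν + 3) / 2 + k) =
      ((k : ℂ) + 1) * (μ + 1) + ((k : ℂ) + 1) ^ 2 + D / 4 := by ring
  have hD : -‖D‖ / 4 ≤ (D / 4).re := by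
    rw [div_ofNat_re]
    linarith [neg_abs_le D.re, abs_re_le_norm D]
  have hk : (0 : ℝ) ≤ k * (μ.re + 3 / 4) := by
    have : 0 ≤ μ.re + 3 / 4 := by linarith [norm_nonneg D]
    positivity
  calc (5 / 4 : ℝ) ≤ (k + 1) * (μ.re + 1) + (k + 1) ^ 2 - ‖D‖ / 4 := by
        nlinarith [k.cast_nonneg (α := ℝ)]
    _ ≤ (((k : ℂ) + 1) * (μ + 1) + ((k : ℂ) + 1) ^ 2 + D / 4).re := by
        simp only [add_re, add_im, mul_re, sq, natCast_re, natCast_im, one_re, one_im]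
        linarith
    _ ≤ _ := hfactor ▸ re_le_norm _

theorem five_fourths_pow_le_norm_poch_mul_poch
    (hμν : ‖(μ + 1) ^ 2 - ν ^ 2‖ ≤ 4 * μ.re + 3) (n : ℕ) :
    (5 / 4 : ℝ) ^ n ≤ ‖poch ((μ - ν + 3) / 2) n * poch ((μ + ν + 3) / 2) n‖ := by
  rw [poch, poch, ← Finset.prod_mul_distrib, norm_prod]
  calc (5 / 4 : ℝ) ^ n = ∏ _k ∈ Finset.range n, (5 / 4 : ℝ) := by
        rw [Finset.prod_const, Finset.card_range]
    _ ≤ _ := Finset.prod_le_prod (fun _ _ => by norm_num)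
      fun k _ => five_fourths_le_norm_lommel_factor hμν k

theorem norm_lommel_coeff_le (hμν : ‖(μ + 1) ^ 2 - ν ^ 2‖ ≤ 4 * μ.re + 3) (n : ℕ) :
    ‖(-1 / 4 : ℂ) ^ (n + 1) /
      (poch ((μ - ν + 3) / 2) (n + 1) * poch ((μ + ν + 3) / 2) (n + 1))‖ ≤
      (1 / 5 : ℝ) ^ (n + 1) := by
  have hpoch := five_fourths_pow_le_norm_poch_mul_poch hμν (n + 1)
  rw [norm_div, norm_pow, div_le_iff₀ (lt_of_lt_of_le (by positivity) hpoch)]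
  calc ‖(-1 / 4 : ℂ)‖ ^ (n + 1) = (1 / 5 : ℝ) ^ (n + 1) * (5 / 4) ^ (n + 1) := by
        rw [← mul_pow]
        norm_num
    _ ≤ _ := by gcongr

end Lommel

theorem lommel_div_memPe_general (μ ν : ℂ)
    (h : 4 * μ.re ≥ (Real.exp 1 - 1) * ‖(μ + 1) ^ 2 - ν ^ 2‖ - 3) :
    memPe (fun z => 1 + ∑' n : ℕ, (-1/4 : ℂ) ^ (n + 1) /
      (poch ((μ - ν + 3) / 2) (n + 1) * poch ((μ + ν + 3) / 2) (n + 1)) * z ^ (n + 1)) := by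
  have hμν : ‖(μ + 1) ^ 2 - ν ^ 2‖ ≤ 4 * μ.re + 3 := by
    have : 1 ≤ Real.exp 1 - 1 := by linarith [Real.add_one_le_exp 1]
    nlinarith [norm_nonneg ((μ + 1) ^ 2 - ν ^ 2)]
  have hgeom : Summable fun n : ℕ => (1 / 5 : ℝ) ^ (n + 1) :=
    (summable_nat_add_iff 1).mpr (summable_geometric_of_lt_one (by norm_num) (by norm_num))
  refine memPe_of_norm_coeff_le (norm_lommel_coeff_le hμν) hgeom ?_
  simp_rw [pow_succ']
  rw [tsum_mul_left, tsum_geometric_of_lt_one (by norm_num) (by norm_num)]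
  norm_num

/-- Sufficient condition for `z ↦ h_{μ,ν}(z)/z` (with value 1 at 0) to belong to `P_e`,
for complex parameters `μ, ν`. -/
theorem lommel_div_memPe (μ ν : ℂ)
    (hodd : ∀ k : ℕ, μ + ν ≠ -(2 * (k : ℂ) + 1) ∧ μ - ν ≠ -(2 * (k : ℂ) + 1))
    (h : 4 * μ.re ≥ (Real.exp 1 - 1) * ‖(μ + 1) ^ 2 - ν ^ 2‖ - 3) :
    memPe (fun z => 1 + ∑' n : ℕ, (-1/4 : ℂ) ^ (n + 1) /
      (poch ((μ - ν + 3) / 2) (n + 1) * poch ((μ + ν + 3) / 2) (n + 1)) * z ^ (n + 1)) :=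
  lommel_div_memPe_general μ ν h
end
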